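/- For nonzero vectors g, g' ∈ ℝⁿ, if ‖g - g'‖ ≤ α·‖g‖ with 0 < α < 1, then the angle θ between g and g' satisfies sin(θ) ≤ α (equivalently, cos θ ≥ √(1 - α²)). -/

import Mathlib

theorem pol_angle_sin_bound (n : ℕ) (g g' : EuclideanSpace ℝ (Fin n))
    (hg : g ≠ 0) (hg' : g' ≠ 0) (α : ℝ) (hα0 : 0 < α) (hα1 : α < 1)
    (h : ‖g - g'‖ ≤ α * ‖g‖) :
    Real.sin (InnerProductGeometry.angle g g') ≤ α ∧
    Real.sqrt (1 - α ^ 2) ≤ Real.cos (InnerProductGeometry.angle g g') := by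
  have ha : (0:ℝ) < ‖g‖ := norm_pos_iff.mpr hg
  have hb : (0:ℝ) < ‖g'‖ := norm_pos_iff.mpr hg'
  set a := ‖g‖
  set b := ‖g'‖
  set s := Real.sqrt (1 - α ^ 2) with hs
  have hs0 : 0 ≤ s := Real.sqrt_nonneg _
  have hs2 : s ^ 2 = 1 - α ^ 2 := Real.sq_sqrt (by nlinarith)
  have hsq : ‖g - g'‖ ^ 2 ≤ α ^ 2 * a ^ 2 := by
    have h0 : (0:ℝ) ≤ ‖g - g'‖ := norm_nonneg _
    nlinarith
  have hexp : ‖g - g'‖ ^ 2 = a ^ 2 - 2 * inner ℝ g g' + b ^ 2 := by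
    exact norm_sub_sq_real g g'
  have hinner : s * (a * b) ≤ inner ℝ g g' := by
    nlinarith [sq_nonneg (s * a - b)]
  have hcos : s ≤ Real.cos (InnerProductGeometry.angle g g') := by
    rw [InnerProductGeometry.cos_angle]
    rw [le_div_iff₀ (by positivity)]
    exact hinner
  refine ⟨?_, hcos⟩
  have hsin : Real.sin (InnerProductGeometry.angle g g') =
      Real.sqrt (1 - Real.cos (InnerProductGeometry.angle g g') ^ 2) := by
    rw [InnerProductGeometry.angle, Real.sin_arccos, Real.cos_arccos
      (abs_le.mp (abs_real_inner_div_norm_mul_norm_le_one g g')).1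
      (abs_le.mp (abs_real_inner_div_norm_mul_norm_le_one g g')).2]
  rw [hsin]
  have hc2 : 1 - Real.cos (InnerProductGeometry.angle g g') ^ 2 ≤ α ^ 2 := by
    nlinarith
  calc Real.sqrt (1 - Real.cos (InnerProductGeometry.angle g g') ^ 2)
      ≤ Real.sqrt (α ^ 2) := Real.sqrt_le_sqrt hc2
    _ = α := Real.sqrt_sq hα0.le
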